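/- arXiv:0903.5346 — 2 statements merged into one kernel-verified Lean document; each statement's English description precedes it below -/
import Mathlib

section
/- (Core of the forward-chase stopping lemma.) Suppose C is finite. Let t_1, t_2, …, t_m be a finite sequence of k-tuples over C ∪ N such that for all i < j, t_i is NOT more specific than t_j (the condition under which the Youtopia forward chase is allowed to keep inserting generated tuples into a relation). Then m is at most the number of specificity-equivalence classes of k-tuples, and in particular m ≤ (|C| + k)^k. Consequently no such sequence can be extended indefinitely. -/
/-- `t` is more specific than `t'` (over constants `C`; all other values are
labeled nulls): the assignment `f (t' i) = t i` is a well-defined function on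
the entries of `t'`, and it is the identity on constants. -/
def MoreSpecific {V : Type*} (C : Set V) {k : ℕ} (t t' : Fin k → V) : Prop :=
  (∀ i j, t' i = t' j → t i = t j) ∧ (∀ i, t' i ∈ C → t i = t' i)

/-- `t` and `t'` are specificity-equivalent: each is more specific than the other. -/
def SpecEquiv {V : Type*} (C : Set V) {k : ℕ} (t t' : Fin k → V) : Prop :=
  MoreSpecific C t t' ∧ MoreSpecific C t' t

/-- Specificity-equivalence is an equivalence relation on `k`-tuples. -/
def specSetoid (V : Type*) (C : Set V) (k : ℕ) : Setoid (Fin k → V) where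
  r := SpecEquiv C
  iseqv := by
    constructor
    · intro t
      exact ⟨⟨fun i j h => h, fun i _ => rfl⟩, ⟨fun i j h => h, fun i _ => rfl⟩⟩
    · intro t t' h
      exact ⟨h.2, h.1⟩
    · intro a b c h1 h2
      refine ⟨⟨fun i j h => h1.1.1 i j (h2.1.1 i j h), fun i h => ?_⟩,
              ⟨fun i j h => h2.2.1 i j (h1.2.1 i j h), fun i h => ?_⟩⟩
      · have hb : b i = c i := h2.1.2 i h
        have hbC : b i ∈ C := by rw [hb]; exact h
        rw [h1.1.2 i hbC, hb]
      · have hb : b i = a i := h1.2.2 i h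
        have hbC : b i ∈ C := by rw [hb]; exact h
        rw [h2.2.2 i hbC, hb]

lemma min'_congr {α : Type*} [LinearOrder α] {A B : Finset α} (h : A = B)
    (hA : A.Nonempty) (hB : B.Nonempty) : A.min' hA = B.min' hB := by subst h; rfl

open Classical in
/-- Canonical code of a tuple: constants are recorded as themselves, non-constant
entries are recorded by the least index with the same value. -/
noncomputable def specCode {V : Type*} (C : Set V) {k : ℕ} (s : Fin k → V) :
    Fin k → ↥C ⊕ Fin k := fun i =>
  if h : s i ∈ C then Sum.inl ⟨s i, h⟩
  else Sum.inr ((Finset.univ.filter fun j => s j = s i).min' ⟨i, by simp⟩)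

lemma specCode_eq_of_specEquiv {V : Type*} (C : Set V) {k : ℕ} {s s' : Fin k → V}
    (hss : SpecEquiv C s s') : specCode C s = specCode C s' := by
  classical
  obtain ⟨⟨h1, h2⟩, ⟨h1', h2'⟩⟩ := hss
  funext i
  by_cases hc : s' i ∈ C
  · have hs : s i = s' i := h2 i hc
    have hc' : s i ∈ C := hs ▸ hc
    simp only [specCode, dif_pos hc, dif_pos hc']
    exact congrArg Sum.inl (Subtype.ext hs)
  · have hc' : s i ∉ C := fun hx => hc ((h2' i hx) ▸ hx)
    simp only [specCode, dif_neg hc, dif_neg hc']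
    have hset : (Finset.univ.filter fun j => s j = s i)
        = (Finset.univ.filter fun j => s' j = s' i) := by
      ext j
      simp only [Finset.mem_filter, Finset.mem_univ, true_and]
      exact ⟨fun hj => h1' j i hj, fun hj => h1 j i hj⟩
    exact congrArg Sum.inr (min'_congr hset _ _)

lemma moreSpecific_of_specCode_eq {V : Type*} (C : Set V) {k : ℕ} {s s' : Fin k → V}
    (hcode : specCode C s = specCode C s') : MoreSpecific C s s' := by
  classical
  have hconst : ∀ i, s' i ∈ C → s i = s' i := by
    intro i hc
    have hi := congrFun hcode i
    by_cases hc' : s i ∈ C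
    · simp only [specCode, dif_pos hc, dif_pos hc'] at hi
      exact congrArg Subtype.val (Sum.inl.inj hi)
    · simp only [specCode, dif_pos hc, dif_neg hc'] at hi
      exact absurd hi (by simp)
  refine ⟨?_, hconst⟩
  intro i j hij
  by_cases hc : s' i ∈ C
  · have hcj : s' j ∈ C := hij ▸ hc
    rw [hconst i hc, hconst j hcj, hij]
  · have hcj : s' j ∉ C := fun hx => hc (hij ▸ hx)
    have hc' : s i ∉ C := by
      intro hx
      have hi := congrFun hcode i
      simp only [specCode, dif_neg hc, dif_pos hx] at hi
      exact absurd hi (by simp)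
    have hcj' : s j ∉ C := by
      intro hx
      have hj := congrFun hcode j
      simp only [specCode, dif_neg hcj, dif_pos hx] at hj
      exact absurd hj (by simp)
    -- the codes of s' at i and j coincide
    have hsame : specCode C s' i = specCode C s' j := by
      simp only [specCode, dif_neg hc, dif_neg hcj]
      congr 1
      have : (Finset.univ.filter fun l => s' l = s' i)
          = (Finset.univ.filter fun l => s' l = s' j) := by
        ext l; simp [hij]
      exact min'_congr this _ _
    have hsij : specCode C s i = specCode C s j := by
      rw [congrFun hcode i, congrFun hcode j, hsame]
    simp only [specCode, dif_neg hc', dif_neg hcj'] at hsij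
    set A := Finset.univ.filter fun l => s l = s i with hA
    set B := Finset.univ.filter fun l => s l = s j with hB
    have hmin : A.min' ⟨i, by simp [hA]⟩ = B.min' ⟨j, by simp [hB]⟩ :=
      Sum.inr.inj hsij
    have hAi : s (A.min' ⟨i, by simp [hA]⟩) = s i := by
      have := Finset.min'_mem A ⟨i, by simp [hA]⟩
      simpa [hA] using this
    have hBj : s (B.min' ⟨j, by simp [hB]⟩) = s j := by
      have := Finset.min'_mem B ⟨j, by simp [hB]⟩
      simpa [hB] using this
    rw [← hAi, hmin, hBj]

/-- Core of the forward-chase stopping lemma: if `C` is finite and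
`t 0, …, t (m-1)` is a sequence of `k`-tuples such that for all `i < j` the
tuple `t i` is not more specific than `t j`, then `m` is at most the number of
specificity-equivalence classes of `k`-tuples, and in particular
`m ≤ (|C| + k)^k`.  Consequently no such sequence can be extended indefinitely. -/
theorem forward_chase_antichain_bound {V : Type*} (C : Set V) (hC : C.Finite)
    (k m : ℕ) (t : Fin m → Fin k → V)
    (h : ∀ i j : Fin m, i < j → ¬ MoreSpecific C (t i) (t j)) :
    m ≤ Nat.card (Quotient (specSetoid V C k)) ∧ m ≤ (C.ncard + k) ^ k := by
  classical
  haveI : Finite ↥C := hC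
  -- the quotient injects into codes
  have hlift : ∀ s s' : Fin k → V, (specSetoid V C k).r s s' →
      specCode C s = specCode C s' := fun s s' hss => specCode_eq_of_specEquiv C hss
  let g : Quotient (specSetoid V C k) → (Fin k → ↥C ⊕ Fin k) :=
    Quotient.lift (specCode C) hlift
  have hginj : Function.Injective g := by
    intro x y
    refine Quotient.inductionOn₂ x y ?_
    intro s s' hgs
    refine Quotient.sound ?_
    have hcode : specCode C s = specCode C s' := hgs
    exact ⟨moreSpecific_of_specCode_eq C hcode,
      moreSpecific_of_specCode_eq C hcode.symm⟩
  haveI : Finite (Quotient (specSetoid V C k)) := Finite.of_injective g hginj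
  -- the sequence injects into the quotient
  have hfinj : Function.Injective
      (fun i : Fin m => (Quotient.mk (specSetoid V C k) (t i))) := by
    intro i j hij
    by_contra hne
    have hequiv : SpecEquiv C (t i) (t j) := Quotient.exact hij
    rcases lt_or_gt_of_ne hne with hlt | hlt
    · exact h i j hlt hequiv.1
    · exact h j i hlt hequiv.2
  have h1 : m ≤ Nat.card (Quotient (specSetoid V C k)) := by
    have := Nat.card_le_card_of_injective _ hfinj
    simpa using this
  refine ⟨h1, h1.trans ?_⟩
  have h2 := Nat.card_le_card_of_injective g hginj
  calc Nat.card (Quotient (specSetoid V C k))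
      ≤ Nat.card (Fin k → ↥C ⊕ Fin k) := h2
    _ = (C.ncard + k) ^ k := by
        rw [Nat.card_fun, Nat.card_sum, Nat.card_eq_fintype_card (α := Fin k),
          Fintype.card_fin, Nat.card_coe_set_eq]
end

section
/- Null-replacements cause only LHS-violations: let σ be a tgd satisfied by the database D, let x ∈ N be a labeled null and v ∈ V a value, and let h : V → V be the substitution sending x to v and fixing every other value. Let h(D) be the database with h(D)(R) = { h∘t : t ∈ D(R) } for every R. Then for every violation ā of σ in h(D), the witness of ā is not contained in the set of tuples of D in which the null x does not occur; that is, some witness tuple is either not a tuple of D or is (the image of) a tuple of D that contained x. -/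
/-- A relational atom over relation symbols `Rel` (with arities `ar`),
whose arguments are either variables from `X` or constants from `C ⊆ V`. -/
structure Atom (Rel : Type*) (ar : Rel → ℕ) (V : Type*) (C : Set V) (X : Type*) where
  rel : Rel
  args : Fin (ar rel) → X ⊕ ↥C

/-- Evaluate an argument (a variable or a constant) under an assignment `a`. -/
def evalArg {V X : Type*} {C : Set V} (a : X → V) : X ⊕ ↥C → V :=
  Sum.elim a Subtype.val

/-- The tuple obtained by instantiating the atom `A` under the assignment `a`. -/
def instAtom {Rel V X : Type*} {ar : Rel → ℕ} {C : Set V} (a : X → V)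
    (A : Atom Rel ar V C X) : Fin (ar A.rel) → V :=
  fun i => evalArg a (A.args i)

/-- A conjunction `Φ` of atoms is satisfied in the database `D` under the
assignment `a` if each instantiated atom is a tuple of the corresponding
relation of `D`. -/
def SatisfiesConj {Rel V X : Type*} {ar : Rel → ℕ} {C : Set V}
    (D : ∀ r : Rel, Set (Fin (ar r) → V)) (a : X → V)
    (Φ : List (Atom Rel ar V C X)) : Prop :=
  ∀ A ∈ Φ, instAtom a A ∈ D A.rel

/-- A tuple-generating dependency `∀ x̄ (Φ(x̄) → ∃ z̄ Ψ(x̄, z̄))` with universally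
quantified variables `X` and existentially quantified variables `Z`:
`Φ` and `Ψ` are finite nonempty conjunctions of atoms, and every universally
quantified variable occurs in `Φ`. -/
structure TGD (Rel : Type*) (ar : Rel → ℕ) (V : Type*) (C : Set V)
    (X Z : Type*) where
  lhs : List (Atom Rel ar V C X)
  rhs : List (Atom Rel ar V C (X ⊕ Z))
  lhs_ne : lhs ≠ []
  rhs_ne : rhs ≠ []
  lhs_vars : ∀ x : X, ∃ A ∈ lhs, ∃ i, A.args i = Sum.inl x

/-- The assignment `a` is a violation of the tgd `σ` in the database `D`:
every instantiated atom of the left-hand side is a tuple of `D`, but no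
assignment to the existential variables makes all instantiated right-hand-side
atoms tuples of `D`. -/
def IsViolation {Rel V X Z : Type*} {ar : Rel → ℕ} {C : Set V}
    (D : ∀ r : Rel, Set (Fin (ar r) → V)) (σ : TGD Rel ar V C X Z)
    (a : X → V) : Prop :=
  SatisfiesConj D a σ.lhs ∧
    ¬ ∃ b : Z → V, SatisfiesConj D (Sum.elim a b) σ.rhs

/-- The database `D` satisfies the tgd `σ` if `σ` has no violation in `D`. -/
def SatisfiesTGD {Rel V X Z : Type*} {ar : Rel → ℕ} {C : Set V}
    (D : ∀ r : Rel, Set (Fin (ar r) → V)) (σ : TGD Rel ar V C X Z) : Prop :=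
  ∀ a : X → V, ¬ IsViolation D σ a

/-- Null-replacements cause only LHS-violations: let `D` satisfy the tgd `σ`,
let `x ∉ C` be a labeled null and `v` a value, and let `h` be the substitution
sending `x` to `v` and fixing every other value.  Then for every violation `a`
of `σ` in the database `h(D)`, the witness of `a` is not contained in the set
of tuples of `D` in which the null `x` does not occur. -/
theorem null_replacement_causes_LHS_violation {Rel V X Z : Type*}
    [DecidableEq V] {ar : Rel → ℕ} {C : Set V}
    (D : ∀ r : Rel, Set (Fin (ar r) → V)) (σ : TGD Rel ar V C X Z)
    (hsat : SatisfiesTGD D σ)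
    (x : V) (hx : x ∉ C) (v : V)
    (h : V → V) (hdef : ∀ w, h w = if w = x then v else w)
    (a : X → V)
    (hviol : IsViolation (fun r => (fun u => h ∘ u) '' D r) σ a) :
    ¬ ∀ A ∈ σ.lhs, instAtom a A ∈ D A.rel ∧ ∀ i, instAtom a A i ≠ x := by
  intro hall
  obtain ⟨hlhs, hnorhs⟩ := hviol
  have hfix : ∀ w : V, w ≠ x → h w = w := by
    intro w hw; rw [hdef]; simp [hw]
  have hax : ∀ y : X, a y ≠ x := by
    intro y
    obtain ⟨A, hA, i, hi⟩ := σ.lhs_vars y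
    have := (hall A hA).2 i
    simpa [instAtom, evalArg, hi] using this
  have hDlhs : SatisfiesConj D a σ.lhs := fun A hA => (hall A hA).1
  have := hsat a
  rw [IsViolation] at this
  push_neg at this
  obtain ⟨b, hb⟩ := this hDlhs
  apply hnorhs
  refine ⟨h ∘ b, fun A hA => ?_⟩
  refine ⟨instAtom (Sum.elim a b) A, hb A hA, ?_⟩
  funext i
  simp only [Function.comp, instAtom, evalArg]
  rcases hArg : A.args i with y | c
  · rcases y with y | z
    · simp [hfix _ (hax y)]
    · simp
  · have : (c : V) ≠ x := fun hc => hx (hc ▸ c.2)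
    simp [hfix _ this]
end
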